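/- Let M ≥ 1 be an integer, η ∈ (0,1), and let Δ, D be integers with (Δ+1)·η ≥ M and Δ < D. Given a probability distribution Ψ on {1, …, D}, define Ψ̃ on {1, …, Δ} by Ψ̃_d = Ψ_d for 1 ≤ d < Δ and Ψ̃_Δ = ∑_{d=Δ}^{D} Ψ_d. Then Ψ̃ is a probability distribution on {1, …, Δ}, and for all nonnegative reals ħ_1, …, ħ_M and all x ∈ [0, 1−η], Ω(x; ħ, Ψ̃) ≥ Ω(x; ħ, Ψ). Consequently, for any real θ, if Ω(x; ħ, Ψ) + θ·ln(1−x) ≥ 0 for all x ∈ [0, 1−η], then also Ω(x; ħ, Ψ̃) + θ·ln(1−x) ≥ 0 for all x ∈ [0, 1−η]. -/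

import Mathlib

/-- The regularized incomplete beta function with positive integer parameters `a`, `b`. -/
noncomputable def incBeta (a b : ℕ) (x : ℝ) : ℝ :=
  ∑ j ∈ Finset.Icc a (a + b - 1),
    (Nat.choose (a + b - 1) j : ℝ) * x ^ j * (1 - x) ^ (a + b - 1 - j)

/-- `S_r(x; Ψ) = ∑_{d=r+1}^D d Ψ_d I_{d-r,r}(x) + ∑_{d=1}^{min(r,D)} d Ψ_d`. -/
noncomputable def Sfun (D r : ℕ) (Ψ : ℕ → ℝ) (x : ℝ) : ℝ :=
  (∑ d ∈ Finset.Icc (r + 1) D, (d : ℝ) * Ψ d * incBeta (d - r) r x) +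
    ∑ d ∈ Finset.Icc 1 (min r D), (d : ℝ) * Ψ d

/-- `Ω(x; ħ, Ψ) = ∑_{r=1}^M ħ_r S_r(x; Ψ)`. -/
noncomputable def OmegaFun (M D : ℕ) (hb Ψ : ℕ → ℝ) (x : ℝ) : ℝ :=
  ∑ r ∈ Finset.Icc 1 M, hb r * Sfun D r Ψ x

/-- The truncated degree distribution `Ψ̃`: `Ψ̃_d = Ψ_d` for `d < Δ`,
`Ψ̃_Δ = ∑_{d=Δ}^D Ψ_d`, and `Ψ̃_d = 0` for `d > Δ`. -/
noncomputable def tildeDist (Δ D : ℕ) (Ψ : ℕ → ℝ) : ℕ → ℝ := fun d =>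
  if d < Δ then Ψ d else if d = Δ then ∑ e ∈ Finset.Icc Δ D, Ψ e else 0

/-!
Each `S_r(·; Ψ)` is a `Ψ`-average of the weight `w_r(d) = d · I_{d-r,r}(x)` (for `d ≤ r` the factor
`I_{0,r}` is `1`), so truncating at `Δ` increases `S_r` as soon as `w_r` does not increase on
`d ≥ Δ`. Read `I_{d-r,r}(x)` as the binomial tail `P(Bin(d-1, x) ≥ d-r)`. Pascal's rule gives
`I_{d+1-r,r}(x) = I_{d-r,r}(x) - (1-x) P(Bin(d-1, x) = d-r)`, and the binomial probabilities
decrease along that tail, so `I_{d-r,r}(x) ≤ r P(Bin(d-1, x) = d-r)`. Together these give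
`w_r(d+1) ≤ w_r(d)` whenever `r ≤ (d+1)(1-x)`, which `M ≤ (Δ+1)η` guarantees for `r ≤ M`,
`d ≥ Δ` and `x ≤ 1-η`.
-/

open Finset

noncomputable def binomTerm (n j : ℕ) (x : ℝ) : ℝ :=
  (n.choose j : ℝ) * x ^ j * (1 - x) ^ (n - j)

noncomputable def binomTail (n a : ℕ) (x : ℝ) : ℝ :=
  ∑ j ∈ Icc a n, binomTerm n j x

theorem incBeta_eq_binomTail (a b : ℕ) (x : ℝ) : incBeta a b x = binomTail (a + b - 1) a x :=
  rfl

theorem binomTail_zero (n : ℕ) (x : ℝ) : binomTail n 0 x = 1 := by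
  have h := add_pow x (1 - x) n
  rw [add_sub_cancel, one_pow, ← Nat.Ico_zero_eq_range, Ico_add_one_right_eq_Icc] at h
  rw [binomTail, h]
  exact sum_congr rfl fun j _ => by rw [binomTerm]; ring

theorem binomTerm_nonneg (n j : ℕ) {x : ℝ} (hx0 : 0 ≤ x) (hx1 : x ≤ 1) :
    0 ≤ binomTerm n j x := by
  unfold binomTerm
  have := sub_nonneg.2 hx1
  positivity

theorem binomTerm_eq_zero_of_lt {n j : ℕ} (h : n < j) (x : ℝ) : binomTerm n j x = 0 := by
  simp [binomTerm, Nat.choose_eq_zero_of_lt h]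

theorem binomTerm_succ_succ (n j : ℕ) (x : ℝ) :
    binomTerm (n + 1) (j + 1) x = x * binomTerm n j x + (1 - x) * binomTerm n (j + 1) x := by
  simp only [binomTerm, Nat.choose_succ_succ, Nat.cast_add, Nat.add_sub_add_right]
  rcases lt_trichotomy j n with hj | rfl | hj
  · rw [show n - j = n - (j + 1) + 1 by omega]
    ring
  · simp only [Nat.choose_succ_self, Nat.sub_self]
    ring
  · simp only [Nat.choose_eq_zero_of_lt hj, Nat.choose_eq_zero_of_lt (hj.trans j.lt_succ_self)]
    ring

theorem binomTerm_succ_mul (n j : ℕ) (x : ℝ) :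
    binomTerm n (j + 1) x * ((j + 1) * (1 - x)) = (n - j : ℕ) * x * binomTerm n j x := by
  have hc : (n.choose (j + 1) : ℝ) * (j + 1) = n.choose j * (n - j : ℕ) := by
    exact_mod_cast Nat.choose_succ_right_eq n j
  rcases le_or_gt n j with hj | hj
  · simp [binomTerm, Nat.choose_eq_zero_of_lt (Nat.lt_succ_of_le hj), Nat.sub_eq_zero_of_le hj]
  · rw [binomTerm, binomTerm, show n - j = n - (j + 1) + 1 by omega] at *
    linear_combination (x ^ j * x * (1 - x) ^ (n - (j + 1)) * (1 - x)) * hc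

theorem binomTerm_succ_le {n j : ℕ} {x : ℝ} (hx0 : 0 ≤ x) (hx1 : x < 1)
    (h : (n - j : ℕ) * x ≤ (j + 1) * (1 - x)) : binomTerm n (j + 1) x ≤ binomTerm n j x := by
  have hpos : 0 < ((j : ℝ) + 1) * (1 - x) := by nlinarith
  have hnn := binomTerm_nonneg n j hx0 hx1.le
  rw [← mul_le_mul_iff_of_pos_right hpos, binomTerm_succ_mul]
  nlinarith

theorem binomTail_eq_binomTerm_add {n a : ℕ} (h : a ≤ n) (x : ℝ) :
    binomTail n a x = binomTerm n a x + binomTail n (a + 1) x := by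
  rw [binomTail, binomTail, Icc_eq_cons_Ioc h, sum_cons, Icc_add_one_left_eq_Ioc]

theorem binomTail_succ_succ {n a : ℕ} (h : a ≤ n) (x : ℝ) :
    binomTail (n + 1) (a + 1) x = binomTail n a x - (1 - x) * binomTerm n a x := by
  have shift : ∀ f : ℕ → ℝ, ∑ j ∈ Icc a n, f (j + 1) = ∑ j ∈ Icc (a + 1) (n + 1), f j := by
    intro f
    rw [← Ico_add_one_right_eq_Icc, ← Ico_add_one_right_eq_Icc, sum_Ico_add']
  have upper : ∑ j ∈ Icc a n, binomTerm n (j + 1) x = binomTail n (a + 1) x := by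
    rw [shift (binomTerm n · x), sum_Icc_succ_top (by omega),
      binomTerm_eq_zero_of_lt n.lt_succ_self, add_zero, binomTail]
  rw [binomTail, ← shift (binomTerm (n + 1) · x)]
  simp only [binomTerm_succ_succ, sum_add_distrib, ← mul_sum, upper]
  rw [← binomTail, binomTail_eq_binomTerm_add h]
  ring

theorem binomTail_le_mul_binomTerm {n a : ℕ} {x : ℝ} (hx0 : 0 ≤ x) (hx1 : x < 1)
    (h : (n - a : ℕ) * x ≤ (a + 1) * (1 - x)) :
    binomTail n a x ≤ (n + 1 - a : ℕ) * binomTerm n a x := by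
  have anti : AntitoneOn (binomTerm n · x) (Set.Ici a) := by
    refine antitoneOn_nat_Ici_of_succ_le fun j hj => binomTerm_succ_le hx0 hx1 ?_
    have h1 : ((n - j : ℕ) : ℝ) ≤ (n - a : ℕ) := by exact_mod_cast Nat.sub_le_sub_left hj n
    have h2 : (a : ℝ) ≤ j := by exact_mod_cast hj
    nlinarith
  calc binomTail n a x ≤ #(Icc a n) • binomTerm n a x :=
        sum_le_card_nsmul _ _ _ fun j hj =>
          anti (Set.mem_Ici.2 le_rfl) (Set.mem_Ici.2 (mem_Icc.1 hj).1) (mem_Icc.1 hj).1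
    _ = (n + 1 - a : ℕ) * binomTerm n a x := by rw [Nat.card_Icc, nsmul_eq_mul]

theorem mul_binomTail_succ_succ_le {n a : ℕ} {x : ℝ} (hx0 : 0 ≤ x) (ha : a ≤ n)
    (h : (n : ℝ) + 1 - a ≤ (n + 2) * (1 - x)) :
    (n + 2) * binomTail (n + 1) (a + 1) x ≤ (n + 1) * binomTail n a x := by
  have han : (a : ℝ) ≤ n := by exact_mod_cast ha
  have hx1 : x < 1 := by nlinarith
  have hterm := binomTerm_nonneg n a hx0 hx1.le
  have htail : binomTail n a x ≤ (n + 1 - a) * binomTerm n a x := by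
    have key := binomTail_le_mul_binomTerm (n := n) (a := a) hx0 hx1
    rw [Nat.cast_sub ha, Nat.cast_sub (by omega)] at key
    push_cast at key
    exact key (by nlinarith)
  rw [binomTail_succ_succ ha]
  nlinarith

theorem mul_incBeta_succ_le {r d : ℕ} {x : ℝ} (hr : 1 ≤ r) (hrd : r ≤ d) (hx0 : 0 ≤ x)
    (h : (r : ℝ) ≤ (d + 1) * (1 - x)) :
    ((d : ℝ) + 1) * incBeta (d + 1 - r) r x ≤ d * incBeta (d - r) r x := by
  obtain ⟨n, rfl⟩ : ∃ n, d = n + 1 := ⟨d - 1, by omega⟩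
  have key := mul_binomTail_succ_succ_le (n := n) (a := n + 1 - r) hx0 (by omega)
    (by rw [Nat.cast_sub (by omega)]; push_cast at h ⊢; linarith)
  rw [incBeta_eq_binomTail, incBeta_eq_binomTail, show n + 1 + 1 - r = n + 1 - r + 1 by omega,
    show n + 1 - r + 1 + r - 1 = n + 1 by omega, show n + 1 - r + r - 1 = n by omega]
  push_cast
  linarith

theorem antitoneOn_mul_incBeta {r Δ : ℕ} {x : ℝ} (hr : 1 ≤ r) (hrΔ : r ≤ Δ) (hx0 : 0 ≤ x)
    (h : (r : ℝ) ≤ (Δ + 1) * (1 - x)) :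
    AntitoneOn (fun d : ℕ => (d : ℝ) * incBeta (d - r) r x) (Set.Ici Δ) := by
  have hx1 : 0 ≤ 1 - x := by
    have : (1 : ℝ) ≤ r := by exact_mod_cast hr
    nlinarith
  refine antitoneOn_nat_Ici_of_succ_le fun d hd => ?_
  have hΔd : (Δ : ℝ) ≤ d := by exact_mod_cast hd
  push_cast
  exact mul_incBeta_succ_le hr (hrΔ.trans hd) hx0 (by nlinarith)

theorem incBeta_zero_left (b : ℕ) (x : ℝ) : incBeta 0 b x = 1 :=
  (incBeta_eq_binomTail 0 b x).trans (binomTail_zero _ x)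

theorem Sfun_eq_sum (D r : ℕ) (Ψ : ℕ → ℝ) (x : ℝ) :
    Sfun D r Ψ x = ∑ d ∈ Icc 1 D, Ψ d * (d * incBeta (d - r) r x) := by
  have low : (Icc 1 D).filter (· ≤ r) = Icc 1 (min r D) := by ext; simp; omega
  have high : (Icc 1 D).filter (¬ · ≤ r) = Icc (r + 1) D := by ext; simp; omega
  rw [Sfun, ← sum_filter_add_sum_filter_not (Icc 1 D) (· ≤ r), low, high, add_comm]
  congr 1 <;> refine sum_congr rfl fun d hd => ?_
  · rw [Nat.sub_eq_zero_of_le ((mem_Icc.1 hd).2.trans (min_le_left _ _)), incBeta_zero_left]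
    ring
  · ring

theorem sum_Icc_one_eq_sum_Ico_add_sum_Icc {β : Type*} [AddCommMonoid β] (f : ℕ → β) {Δ D : ℕ}
    (hΔ : 1 ≤ Δ) (hΔD : Δ ≤ D + 1) :
    ∑ d ∈ Icc 1 D, f d = ∑ d ∈ Ico 1 Δ, f d + ∑ d ∈ Icc Δ D, f d := by
  rw [← Ico_add_one_right_eq_Icc, ← Ico_add_one_right_eq_Icc, sum_Ico_consecutive _ hΔ hΔD]

theorem sum_tildeDist_mul (Ψ f : ℕ → ℝ) {Δ : ℕ} (D : ℕ) (hΔ : 1 ≤ Δ) :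
    ∑ d ∈ Icc 1 Δ, tildeDist Δ D Ψ d * f d =
      ∑ d ∈ Ico 1 Δ, Ψ d * f d + (∑ e ∈ Icc Δ D, Ψ e) * f Δ := by
  rw [← Ico_add_one_right_eq_Icc, sum_Ico_succ_top hΔ]
  congr 1
  · exact sum_congr rfl fun d hd => by rw [tildeDist, if_pos (mem_Ico.1 hd).2]
  · simp [tildeDist]

theorem sum_tildeDist {Δ D : ℕ} (Ψ : ℕ → ℝ) (hΔ : 1 ≤ Δ) (hΔD : Δ ≤ D + 1) :
    ∑ d ∈ Icc 1 Δ, tildeDist Δ D Ψ d = ∑ d ∈ Icc 1 D, Ψ d := by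
  have h := sum_tildeDist_mul Ψ (fun _ => 1) D hΔ
  simp only [mul_one] at h
  rw [h, sum_Icc_one_eq_sum_Ico_add_sum_Icc Ψ hΔ hΔD]

theorem tildeDist_nonneg {Δ D : ℕ} {Ψ : ℕ → ℝ} (hΔD : Δ ≤ D + 1)
    (hΨ : ∀ d ∈ Icc 1 D, 0 ≤ Ψ d) {d : ℕ} (hd : 1 ≤ d) : 0 ≤ tildeDist Δ D Ψ d := by
  simp only [tildeDist]
  split_ifs
  · exact hΨ d (mem_Icc.2 ⟨hd, by omega⟩)
  · exact sum_nonneg fun e he => hΨ e (Icc_subset_Icc (by omega) le_rfl he)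
  · exact le_rfl

theorem sum_mul_le_sum_tildeDist_mul {Δ D : ℕ} {Ψ f : ℕ → ℝ} (hΔ : 1 ≤ Δ) (hΔD : Δ ≤ D + 1)
    (hΨ : ∀ d ∈ Icc 1 D, 0 ≤ Ψ d) (hf : AntitoneOn f (Set.Ici Δ)) :
    ∑ d ∈ Icc 1 D, Ψ d * f d ≤ ∑ d ∈ Icc 1 Δ, tildeDist Δ D Ψ d * f d := by
  rw [sum_tildeDist_mul Ψ f D hΔ, sum_Icc_one_eq_sum_Ico_add_sum_Icc _ hΔ hΔD, sum_mul]
  gcongr with d hd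
  · exact hΨ d (mem_Icc.2 ⟨hΔ.trans (mem_Icc.1 hd).1, (mem_Icc.1 hd).2⟩)
  · exact hf (Set.mem_Ici.2 le_rfl) (Set.mem_Ici.2 (mem_Icc.1 hd).1) (mem_Icc.1 hd).1

theorem Sfun_le_Sfun_tildeDist {r Δ D : ℕ} {Ψ : ℕ → ℝ} {x : ℝ} (hr : 1 ≤ r) (hrΔ : r ≤ Δ)
    (hΔD : Δ ≤ D + 1) (hΨ : ∀ d ∈ Icc 1 D, 0 ≤ Ψ d) (hx0 : 0 ≤ x)
    (h : (r : ℝ) ≤ (Δ + 1) * (1 - x)) :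
    Sfun D r Ψ x ≤ Sfun Δ r (tildeDist Δ D Ψ) x := by
  rw [Sfun_eq_sum, Sfun_eq_sum]
  exact sum_mul_le_sum_tildeDist_mul (hr.trans hrΔ) hΔD hΨ (antitoneOn_mul_incBeta hr hrΔ hx0 h)

theorem OmegaFun_le_OmegaFun_tildeDist {M Δ D : ℕ} {hb Ψ : ℕ → ℝ} {x : ℝ} (hMΔ : M ≤ Δ)
    (hΔD : Δ ≤ D + 1) (hΨ : ∀ d ∈ Icc 1 D, 0 ≤ Ψ d) (hhb : ∀ r ∈ Icc 1 M, 0 ≤ hb r)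
    (hx0 : 0 ≤ x) (h : (M : ℝ) ≤ (Δ + 1) * (1 - x)) :
    OmegaFun M D hb Ψ x ≤ OmegaFun M Δ hb (tildeDist Δ D Ψ) x := by
  refine sum_le_sum fun r hr => mul_le_mul_of_nonneg_left ?_ (hhb r hr)
  have hrM := (mem_Icc.1 hr).2
  exact Sfun_le_Sfun_tildeDist (mem_Icc.1 hr).1 (hrM.trans hMΔ) hΔD hΨ hx0
    (le_trans (by exact_mod_cast hrM) h)

theorem truncation_improves_general (M : ℕ) (hM : 1 ≤ M) (η : ℝ) (hη1 : η < 1)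
    (Δ D : ℕ) (hΔη : (M : ℝ) ≤ ((Δ : ℝ) + 1) * η) (hΔD : Δ < D)
    (Ψ : ℕ → ℝ) (hΨnn : ∀ d ∈ Finset.Icc 1 D, 0 ≤ Ψ d)
    (hΨ1 : ∑ d ∈ Finset.Icc 1 D, Ψ d = 1) :
    (∀ d ∈ Finset.Icc 1 Δ, 0 ≤ tildeDist Δ D Ψ d) ∧
    (∑ d ∈ Finset.Icc 1 Δ, tildeDist Δ D Ψ d = 1) ∧
    (∀ hb : ℕ → ℝ, (∀ r ∈ Finset.Icc 1 M, 0 ≤ hb r) →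
      (∀ x ∈ Set.Icc (0:ℝ) (1 - η),
        OmegaFun M Δ hb (tildeDist Δ D Ψ) x ≥ OmegaFun M D hb Ψ x) ∧
      (∀ θ : ℝ,
        (∀ x ∈ Set.Icc (0:ℝ) (1 - η), OmegaFun M D hb Ψ x + θ * Real.log (1 - x) ≥ 0) →
        ∀ x ∈ Set.Icc (0:ℝ) (1 - η),
          OmegaFun M Δ hb (tildeDist Δ D Ψ) x + θ * Real.log (1 - x) ≥ 0)) := by
  have hMΔ : M ≤ Δ := by
    have h : (M : ℝ) < Δ + 1 := hΔη.trans_lt (mul_lt_of_lt_one_right (by positivity) hη1)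
    have : M < Δ + 1 := by exact_mod_cast h
    omega
  have hΔD' : Δ ≤ D + 1 := by omega
  have hOmega : ∀ hb : ℕ → ℝ, (∀ r ∈ Icc 1 M, 0 ≤ hb r) → ∀ x ∈ Set.Icc (0:ℝ) (1 - η),
      OmegaFun M D hb Ψ x ≤ OmegaFun M Δ hb (tildeDist Δ D Ψ) x := fun hb hhb x hx =>
    OmegaFun_le_OmegaFun_tildeDist hMΔ hΔD' hΨnn hhb hx.1
      (hΔη.trans (mul_le_mul_of_nonneg_left (by linarith [hx.2]) (by positivity)))
  refine ⟨fun d hd => tildeDist_nonneg hΔD' hΨnn (mem_Icc.1 hd).1,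
    (sum_tildeDist Ψ (hM.trans hMΔ) hΔD').trans hΨ1, fun hb hhb => ⟨hOmega hb hhb, ?_⟩⟩
  intro θ hθ x hx
  linarith [hθ x hx, hOmega hb hhb x hx]

theorem truncation_improves (M : ℕ) (hM : 1 ≤ M) (η : ℝ) (hη0 : 0 < η) (hη1 : η < 1)
    (Δ D : ℕ) (hΔη : (M : ℝ) ≤ ((Δ : ℝ) + 1) * η) (hΔD : Δ < D)
    (Ψ : ℕ → ℝ) (hΨnn : ∀ d ∈ Finset.Icc 1 D, 0 ≤ Ψ d)
    (hΨ1 : ∑ d ∈ Finset.Icc 1 D, Ψ d = 1) :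
    (∀ d ∈ Finset.Icc 1 Δ, 0 ≤ tildeDist Δ D Ψ d) ∧
    (∑ d ∈ Finset.Icc 1 Δ, tildeDist Δ D Ψ d = 1) ∧
    (∀ hb : ℕ → ℝ, (∀ r ∈ Finset.Icc 1 M, 0 ≤ hb r) →
      (∀ x ∈ Set.Icc (0:ℝ) (1 - η),
        OmegaFun M Δ hb (tildeDist Δ D Ψ) x ≥ OmegaFun M D hb Ψ x) ∧
      (∀ θ : ℝ,
        (∀ x ∈ Set.Icc (0:ℝ) (1 - η), OmegaFun M D hb Ψ x + θ * Real.log (1 - x) ≥ 0) →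
        ∀ x ∈ Set.Icc (0:ℝ) (1 - η),
          OmegaFun M Δ hb (tildeDist Δ D Ψ) x + θ * Real.log (1 - x) ≥ 0)) :=
  truncation_improves_general M hM η hη1 Δ D hΔη hΔD Ψ hΨnn hΨ1
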